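/- Suppose a graph G contains the cycle (u_1, u_2, ..., u_{n-1}, u_1) of length n-1 but no cycle of length n, and let Y = V(G) \ {u_1, ..., u_{n-1}}. Suppose the independence number of G equals m-1, where m ≤ (n+2)/2, and {x_1, x_2, ..., x_{m-1}} ⊆ Y is an independent set of m-1 vertices. Then no member of this set is adjacent to m-2 or more vertices on the cycle. -/

import Mathlib

open SimpleGraph

/-- `G` contains a cycle of length `n` (as a subgraph). -/
def HasCycleOfLength {V : Type*} (G : SimpleGraph V) (n : ℕ) : Prop :=
  ∃ (v : V) (w : G.Walk v v), w.IsCycle ∧ w.length = n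

/-!
Let `x = x_k` and let `T` be the set of positions of its neighbours on the cycle `u`. Since `G`
has no `n`-cycle, `x` has no two consecutive neighbours on the cycle, and the successors
`u (i + 1)`, `i ∈ T`, are pairwise non-adjacent (a chord between two of them, together with `x`,
closes an `n`-cycle). So `x` and these successors form an independent set, whence `|T| ≤ m - 2`.
If `|T| = m - 2`, then `2 |T| < n - 1`, so some `a ∈ T` has `a + 2 ∉ T` (when `T = ∅`, any
cycle vertex can play the role of `u (a + 2)` below). An `x_l` adjacent to `u (a + 2)` is adjacent
to no successor `u (i + 1)`, `i ∈ T`, since that would again close an `n`-cycle through `x` and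
`x_l`. Hence either such an `x_l` enlarges the first independent set,
or `u (a + 2)` enlarges `{x_1, …, x_{m-1}}`: both give an independent set of size `m`.
-/

open Finset

theorem ZMod.exists_eq_add_succ_of_ne {c : ℕ} [NeZero c] {a b : ZMod c} (h : a ≠ b) :
    ∃ d e : ℕ, d + e + 2 = c ∧ b = a + (d + 1 : ℕ) := by
  have h0 : (b - a).val ≠ 0 := by rwa [ne_eq, ZMod.val_eq_zero, sub_eq_zero, eq_comm]
  have hlt := (b - a).val_lt
  refine ⟨(b - a).val - 1, c - (b - a).val - 1, by omega, ?_⟩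
  rw [Nat.sub_add_cancel (by omega), ZMod.natCast_zmod_val]
  ring

theorem ZMod.exists_mem_add_two_notMem {c : ℕ} {T : Finset (ZMod c)} (hT : T.Nonempty)
    (hcard : 2 * #T < c) : ∃ a ∈ T, a + 2 ∉ T := by
  by_contra! hclosed
  obtain ⟨b, hb⟩ := hT
  have hmem : ∀ j : ℕ, b + 2 * (j : ZMod c) ∈ T := by
    intro j
    induction j with
    | zero => simpa using hb
    | succ j ih => simpa [mul_add, ← add_assoc] using hclosed _ ih
  have hinj : Set.InjOn (fun j : ℕ => b + 2 * (j : ZMod c)) (range (#T + 1)) := by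
    intro i hi j hj hij
    simp only [coe_range, Set.mem_Iio] at hi hj
    have h2 : ((2 * i : ℕ) : ZMod c) = ((2 * j : ℕ) : ZMod c) := by
      push_cast; exact add_left_cancel hij
    rw [ZMod.natCast_eq_natCast_iff', Nat.mod_eq_of_lt (by omega),
      Nat.mod_eq_of_lt (by omega)] at h2
    omega
  simpa using card_le_card_of_injOn _ (fun j _ => hmem j) hinj

section Cycles

variable {V : Type*} {G : SimpleGraph V}

theorem SimpleGraph.IsIndepSet.insert_of_forall_not_adj {s : Set V} {a : V}
    (hs : G.IsIndepSet s) (h : ∀ b ∈ s, ¬ G.Adj a b) : G.IsIndepSet (insert a s) :=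
  hs.insert fun b hb _ => ⟨h b hb, fun hba => h b hb hba.symm⟩

theorem card_add_one_le_of_forall_not_adj [DecidableEq V] {N : ℕ}
    (hα : ∀ s : Finset V, G.IsIndepSet ↑s → #s ≤ N) {s : Finset V} (hs : G.IsIndepSet ↑s)
    {a : V} (ha : a ∉ s) (h : ∀ b ∈ s, ¬ G.Adj a b) : #s + 1 ≤ N := by
  rw [← card_insert_of_notMem ha]
  exact hα _ (coe_insert a s ▸ hs.insert_of_forall_not_adj h)

theorem ncard_setOf_mem_range_and_adj {ι : Type*} [Fintype ι] [DecidableRel G.Adj] {u : ι → V}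
    (hu : Function.Injective u) (x : V) :
    {v | v ∈ Set.range u ∧ G.Adj x v}.ncard = #{i | G.Adj x (u i)} := by
  have : {v | v ∈ Set.range u ∧ G.Adj x v} = u '' ↑({i | G.Adj x (u i)} : Finset ι) := by
    ext v
    simp only [Set.mem_range, coe_filter, mem_univ, true_and, Set.mem_image]
    constructor
    · rintro ⟨⟨i, rfl⟩, h⟩
      exact ⟨i, h, rfl⟩
    · rintro ⟨i, h, rfl⟩
      exact ⟨⟨i, rfl⟩, h⟩
  rw [this, Set.ncard_image_of_injective _ hu, Set.ncard_coe_finset]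

theorem hasCycleOfLength_of_isChain_cons {x : V} {l : List V} (hl : l.IsChain G.Adj)
    (hnodup : (x :: l).Nodup) (hhead : ∀ v ∈ l.head?, G.Adj x v)
    (hlast : ∀ v ∈ l.getLast?, G.Adj v x) (hlen : 2 ≤ l.length) :
    HasCycleOfLength G (l.length + 1) := by
  have hne : x :: l ≠ [] := List.cons_ne_nil x l
  have hclose : G.Adj ((x :: l).getLast hne) x := by
    have hl0 : l ≠ [] := List.ne_nil_of_length_pos (by omega)
    rw [List.getLast_cons hl0]
    exact hlast _ (List.getLast?_eq_some_getLast hl0)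
  obtain ⟨p, hp⟩ : ∃ p : G.Walk x ((x :: l).getLast hne), p.support = x :: l :=
    ⟨Walk.ofSupport _ hne (hl.cons hhead), Walk.support_ofSupport _ _⟩
  have hplen : p.length = l.length := by simpa [hp] using p.length_support.symm
  refine ⟨_, .cons hclose p, Walk.isCycle_iff_isPath_tail_and_le_length.mpr ⟨?_, ?_⟩, ?_⟩
  · rw [Walk.isPath_def, Walk.support_tail_of_not_nil _ Walk.not_nil_cons]
    simpa [hp] using hnodup
  · rw [Walk.length_cons, hplen]; omega
  · rw [Walk.length_cons, hplen]

variable {c : ℕ}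

def cycleArc (u : ZMod c → V) (p : ZMod c) (k : ℕ) : List V :=
  (List.range k).map fun t : ℕ => u (p + t)

variable {u : ZMod c → V}

@[simp]
theorem length_cycleArc (p : ZMod c) (k : ℕ) : (cycleArc u p k).length = k := by
  simp [cycleArc]

theorem cycleArc_add (p : ZMod c) (d k : ℕ) :
    cycleArc u p (d + k) = cycleArc u p d ++ cycleArc u (p + d) k := by
  simp [cycleArc, List.range_add, add_assoc]

theorem head?_cycleArc_succ (p : ZMod c) (k : ℕ) :
    (cycleArc u p (k + 1)).head? = some (u p) := by
  simp [cycleArc, List.range_succ_eq_map]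

theorem getLast?_cycleArc_succ (p : ZMod c) (k : ℕ) :
    (cycleArc u p (k + 1)).getLast? = some (u (p + k)) := by
  simp [cycleArc, List.range_succ]

theorem mem_range_of_mem_cycleArc {p : ZMod c} {k : ℕ} {v : V} (hv : v ∈ cycleArc u p k) :
    v ∈ Set.range u := by
  obtain ⟨t, -, rfl⟩ := List.mem_map.mp hv
  exact ⟨_, rfl⟩

theorem nodup_cycleArc (hu : Function.Injective u) (p : ZMod c) {k : ℕ} (hk : k ≤ c) :
    (cycleArc u p k).Nodup := by
  refine List.nodup_range.map_on fun s hs t ht hst => ?_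
  have := add_left_cancel (hu hst)
  rw [ZMod.natCast_eq_natCast_iff'] at this
  simp only [List.mem_range] at hs ht
  rwa [Nat.mod_eq_of_lt (by omega), Nat.mod_eq_of_lt (by omega)] at this

theorem isChain_cycleArc (hcyc : ∀ i, G.Adj (u i) (u (i + 1))) (p : ZMod c) (k : ℕ) :
    (cycleArc u p k).IsChain G.Adj := by
  rw [cycleArc, List.isChain_map, List.range_eq_range']
  refine (List.isChain_range' 0 k 1).imp fun s t hst => ?_
  simpa [hst, add_assoc] using hcyc (p + s)

theorem isChain_reverse_cycleArc (hcyc : ∀ i, G.Adj (u i) (u (i + 1))) (p : ZMod c) (k : ℕ) :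
    (cycleArc u p k).reverse.IsChain G.Adj :=
  List.isChain_reverse.mpr ((isChain_cycleArc hcyc p k).imp fun _ _ h => h.symm)

theorem hasCycleOfLength_succ_of_adj_of_adj_add_one (hc : 2 ≤ c) (hu : Function.Injective u)
    (hcyc : ∀ i, G.Adj (u i) (u (i + 1))) {x : V}
    (hx : x ∉ Set.range u) {i : ZMod c} (h₁ : G.Adj x (u i)) (h₂ : G.Adj x (u (i + 1))) :
    HasCycleOfLength G (c + 1) := by
  obtain ⟨k, rfl⟩ : ∃ k, c = k + 1 := ⟨c - 1, by omega⟩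
  have hk : ((k : ℕ) : ZMod (k + 1)) = -1 := by
    rw [eq_neg_iff_add_eq_zero]; exact_mod_cast ZMod.natCast_self (k + 1)
  simpa using hasCycleOfLength_of_isChain_cons (x := x) (l := cycleArc u (i + 1) (k + 1))
    (isChain_cycleArc hcyc _ _)
    (List.nodup_cons.mpr
      ⟨fun h => hx (mem_range_of_mem_cycleArc h), nodup_cycleArc hu _ le_rfl⟩)
    (by simpa [head?_cycleArc_succ] using h₂)
    (by simpa [getLast?_cycleArc_succ, hk] using h₁.symm)
    (by simp; omega)

-- The cycle `x, u a, u (a - 1), …, u (b + 1), u (a + 1), u (a + 2), …, u b`.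
theorem hasCycleOfLength_succ_of_adj_add_one_add_one [NeZero c] (hu : Function.Injective u)
    (hcyc : ∀ i, G.Adj (u i) (u (i + 1))) {x : V} (hx : x ∉ Set.range u) {a b : ZMod c}
    (hab : a ≠ b) (ha : G.Adj x (u a)) (hb : G.Adj x (u b))
    (hchord : G.Adj (u (a + 1)) (u (b + 1))) : HasCycleOfLength G (c + 1) := by
  obtain ⟨d, e, rfl, rfl⟩ := ZMod.exists_eq_add_succ_of_ne hab
  have hc : ((d + e + 2 : ℕ) : ZMod (d + e + 2)) = 0 := ZMod.natCast_self _
  set A := cycleArc u (a + 1) (d + 1)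
  set B := cycleArc u (a + 1 + (d + 1 : ℕ)) (e + 1)
  have hperm : (B.reverse ++ A).Perm (cycleArc u (a + 1) (d + 1 + (e + 1))) := by
    rw [cycleArc_add]
    exact ((List.reverse_perm B).append_right A).trans List.perm_append_comm
  have hchain : (B.reverse ++ A).IsChain G.Adj := by
    refine List.IsChain.append ?_ (isChain_cycleArc hcyc _ _) ?_
    · exact isChain_reverse_cycleArc hcyc _ _
    · simp only [List.getLast?_reverse, B, A, head?_cycleArc_succ, Option.mem_def,
        Option.some.injEq]
      rintro _ rfl _ rfl
      rw [add_right_comm]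
      exact hchord.symm
  convert hasCycleOfLength_of_isChain_cons (x := x) hchain ?_ ?_ ?_ (by simp [A, B]; omega) using 1
  · simp [A, B]; omega
  · exact List.nodup_cons.mpr ⟨fun h => hx (mem_range_of_mem_cycleArc (hperm.subset h)),
      hperm.nodup_iff.mpr (nodup_cycleArc hu _ (by omega))⟩
  · simp only [A, B, List.head?_append, List.head?_reverse, getLast?_cycleArc_succ, Option.some_or,
      Option.mem_def, Option.some.injEq, forall_eq']
    convert ha using 2
    push_cast at hc ⊢
    linear_combination hc
  · simp only [A, List.getLast?_append, getLast?_cycleArc_succ, Option.some_or,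
      Option.mem_def, Option.some.injEq, forall_eq']
    convert hb.symm using 2
    push_cast
    ring

-- The cycle `x, u a, u (a - 1), …, u (b + 1), y, u (a + 2), u (a + 3), …, u b`.
theorem hasCycleOfLength_succ_of_adj_add_two_add_one [NeZero c] (hu : Function.Injective u)
    (hcyc : ∀ i, G.Adj (u i) (u (i + 1))) {x y : V} (hx : x ∉ Set.range u)
    (hy : y ∉ Set.range u) (hxy : x ≠ y) {a b : ZMod c} (hab : a ≠ b) (hba : b ≠ a + 1)
    (ha : G.Adj x (u a)) (hb : G.Adj x (u b)) (hya : G.Adj y (u (a + 2)))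
    (hyb : G.Adj y (u (b + 1))) : HasCycleOfLength G (c + 1) := by
  obtain ⟨d, e, rfl, rfl⟩ := ZMod.exists_eq_add_succ_of_ne hba.symm
  have hc : ((d + e + 2 : ℕ) : ZMod (d + e + 2)) = 0 := ZMod.natCast_self _
  obtain ⟨e, rfl⟩ : ∃ e', e = e' + 1 := by
    refine Nat.exists_eq_add_one.mpr (Nat.pos_of_ne_zero fun he => hab ?_)
    subst he
    push_cast at hc ⊢
    linear_combination -hc
  set A := cycleArc u (a + 2) (d + 1)
  set B := cycleArc u (a + 2 + (d + 1 : ℕ)) (e + 1)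
  have hperm : (B.reverse ++ y :: A).Perm (y :: cycleArc u (a + 2) (d + 1 + (e + 1))) := by
    rw [cycleArc_add]
    exact List.perm_middle.trans
      (List.Perm.cons y (((List.reverse_perm B).append_right A).trans List.perm_append_comm))
  have hchain : (B.reverse ++ y :: A).IsChain G.Adj := by
    refine List.IsChain.append ?_ ((isChain_cycleArc hcyc _ _).cons ?_) ?_
    · exact isChain_reverse_cycleArc hcyc _ _
    · simpa [A, head?_cycleArc_succ] using hya
    · simp only [List.getLast?_reverse, B, head?_cycleArc_succ, List.head?_cons, Option.mem_def,
        Option.some.injEq]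
      rintro _ rfl _ rfl
      convert hyb.symm using 2
      push_cast
      ring
  have hnodup : (y :: cycleArc u (a + 2) (d + 1 + (e + 1))).Nodup :=
    List.nodup_cons.mpr
      ⟨fun h => hy (mem_range_of_mem_cycleArc h), nodup_cycleArc hu _ (by omega)⟩
  convert hasCycleOfLength_of_isChain_cons (x := x) hchain ?_ ?_ ?_ (by simp [A, B]; omega) using 1
  · simp [A, B]; omega
  · refine List.nodup_cons.mpr ⟨fun h => ?_, hperm.nodup_iff.mpr hnodup⟩
    rcases List.mem_cons.mp (hperm.subset h) with h | h
    · exact hxy h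
    · exact hx (mem_range_of_mem_cycleArc h)
  · simp only [A, B, List.head?_append, List.head?_reverse, getLast?_cycleArc_succ, Option.some_or,
      Option.mem_def, Option.some.injEq, forall_eq']
    convert ha using 2
    push_cast at hc ⊢
    linear_combination hc
  · simp only [A, List.getLast?_append, List.getLast?_cons, getLast?_cycleArc_succ,
      Option.getD_some, Option.some_or, Option.mem_def, Option.some.injEq, forall_eq']
    convert hb.symm using 2
    push_cast
    ring

theorem isIndepSet_insert_image_add_one [NeZero c] [DecidableEq V] (hc : 2 ≤ c)
    (hu : Function.Injective u) (hcyc : ∀ i, G.Adj (u i) (u (i + 1)))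
    (hno : ¬ HasCycleOfLength G (c + 1)) {x : V} (hx : x ∉ Set.range u)
    {T : Finset (ZMod c)} (hT : ∀ i ∈ T, G.Adj x (u i)) :
    G.IsIndepSet ↑(insert x (T.image fun i => u (i + 1))) := by
  rw [coe_insert, coe_image]
  refine IsIndepSet.insert_of_forall_not_adj ?_ ?_
  · have hinj : Function.Injective fun i : ZMod c => u (i + 1) := hu.comp (add_left_injective 1)
    refine hinj.injOn.pairwise_image.mpr fun i hi j hj hij hadj => ?_
    exact hno (hasCycleOfLength_succ_of_adj_add_one_add_one hu hcyc hx hij (hT i hi) (hT j hj) hadj)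
  · rintro _ ⟨i, hi, rfl⟩ hadj
    exact hno (hasCycleOfLength_succ_of_adj_of_adj_add_one hc hu hcyc hx (hT i hi) hadj)

theorem card_insert_image_add_one [DecidableEq V] (hu : Function.Injective u) {x : V}
    (hx : x ∉ Set.range u) (T : Finset (ZMod c)) :
    #(insert x (T.image fun i => u (i + 1))) = #T + 1 := by
  have hinj : Function.Injective fun i : ZMod c => u (i + 1) := hu.comp (add_left_injective 1)
  rw [card_insert_of_notMem, card_image_of_injective _ hinj]
  rintro hmem
  obtain ⟨i, -, rfl⟩ := mem_image.mp hmem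
  exact hx ⟨_, rfl⟩

theorem not_adj_add_one_of_adj_add_two [NeZero c] (hc : 2 ≤ c) (hu : Function.Injective u)
    (hcyc : ∀ i, G.Adj (u i) (u (i + 1))) (hno : ¬ HasCycleOfLength G (c + 1))
    {x y : V} (hx : x ∉ Set.range u) (hy : y ∉ Set.range u)
    (hxy : x ≠ y) {a i : ZMod c} (ha : G.Adj x (u a)) (hya : G.Adj y (u (a + 2)))
    (hi : G.Adj x (u i)) : ¬ G.Adj y (u (i + 1)) := by
  intro hyi
  rcases eq_or_ne i a with rfl | hia
  · refine hno (hasCycleOfLength_succ_of_adj_of_adj_add_one hc hu hcyc hy hyi ?_)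
    rwa [add_assoc, one_add_one_eq_two]
  rcases eq_or_ne i (a + 1) with rfl | hia'
  · exact hno (hasCycleOfLength_succ_of_adj_of_adj_add_one hc hu hcyc hx ha hi)
  · exact hno (hasCycleOfLength_succ_of_adj_add_two_add_one hu hcyc hx hy hxy hia.symm hia' ha hi
      hya hyi)

theorem exists_not_adj_forall_adj_not_adj_add_one [NeZero c] [DecidableRel G.Adj] (hc : 2 ≤ c)
    (hu : Function.Injective u) (hcyc : ∀ i, G.Adj (u i) (u (i + 1)))
    (hno : ¬ HasCycleOfLength G (c + 1)) {x : V}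
    (hx : x ∉ Set.range u) (hcard : 2 * #{i | G.Adj x (u i)} < c) :
    ∃ j, ¬ G.Adj x (u j) ∧
      ∀ y ∉ Set.range u, G.Adj y (u j) → ∀ i, G.Adj x (u i) → ¬ G.Adj y (u (i + 1)) := by
  rcases ({i | G.Adj x (u i)} : Finset (ZMod c)).eq_empty_or_nonempty with hT | hT
  · have hnone : ∀ i, ¬ G.Adj x (u i) := fun i hi =>
      eq_empty_iff_forall_notMem.mp hT i (by simpa using hi)
    exact ⟨0, hnone 0, fun y _ _ i hi => (hnone i hi).elim⟩
  obtain ⟨a, ha, ha2⟩ := ZMod.exists_mem_add_two_notMem hT hcard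
  simp only [mem_filter, mem_univ, true_and] at ha ha2
  exact ⟨a + 2, ha2, fun y hy hya i hi => not_adj_add_one_of_adj_add_two hc hu hcyc hno hx hy
    (by rintro rfl; exact ha2 hya) ha hya hi⟩

theorem card_add_two_le_of_forall_not_adj_add_one [NeZero c] [DecidableEq V] (hc : 2 ≤ c)
    (hu : Function.Injective u) (hcyc : ∀ i, G.Adj (u i) (u (i + 1)))
    (hno : ¬ HasCycleOfLength G (c + 1)) {N : ℕ}
    (hα : ∀ s : Finset V, G.IsIndepSet ↑s → #s ≤ N) {x y : V} (hx : x ∉ Set.range u)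
    (hy : y ∉ Set.range u) (hxy : x ≠ y) (hyx : ¬ G.Adj y x) {T : Finset (ZMod c)}
    (hT : ∀ i ∈ T, G.Adj x (u i)) (hyT : ∀ i ∈ T, ¬ G.Adj y (u (i + 1))) :
    #T + 2 ≤ N := by
  have := card_add_one_le_of_forall_not_adj hα
    (isIndepSet_insert_image_add_one hc hu hcyc hno hx hT) (a := y) ?_ ?_
  · rwa [card_insert_image_add_one hu hx] at this
  · simp only [mem_insert, mem_image, not_or, not_exists, not_and]
    exact ⟨hxy.symm, fun i _ h => hy ⟨_, h⟩⟩
  · simp only [mem_insert, mem_image, forall_eq_or_imp, forall_exists_index, and_imp,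
      forall_apply_eq_imp_iff₂]
    exact ⟨hyx, hyT⟩

end Cycles

theorem indepSet_few_neighbors_on_cycle_general (n m : ℕ) (hn : 4 ≤ n) (hm : 2 * m ≤ n + 2)
    {V : Type*} (G : SimpleGraph V)
    (u : ZMod (n - 1) → V) (hu : Function.Injective u)
    (hcyc : ∀ i : ZMod (n - 1), G.Adj (u i) (u (i + 1)))
    (hno : ¬ HasCycleOfLength G n)
    (hα_le : ∀ s : Finset V, (s : Set V).Pairwise (fun a b => ¬ G.Adj a b) → s.card ≤ m - 1)
    (x : Fin (m - 1) → V) (hxinj : Function.Injective x)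
    (hxY : ∀ k, x k ∉ Set.range u)
    (hxind : ∀ k l, k ≠ l → ¬ G.Adj (x k) (x l)) :
    ∀ k, ({v | v ∈ Set.range u ∧ G.Adj (x k) v}).ncard < m - 2 := by
  classical
  intro k
  have : NeZero (n - 1) := ⟨by omega⟩
  have hc : 2 ≤ n - 1 := by omega
  replace hno : ¬ HasCycleOfLength G (n - 1 + 1) := by rwa [Nat.sub_add_cancel (by omega)]
  rw [ncard_setOf_mem_range_and_adj hu]
  set T : Finset (ZMod (n - 1)) := {i | G.Adj (x k) (u i)}
  have hT : ∀ i ∈ T, G.Adj (x k) (u i) := fun i hi => (mem_filter.mp hi).2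
  have hTm : #T + 1 ≤ m - 1 := card_insert_image_add_one hu (hxY k) T ▸
    hα_le _ (isIndepSet_insert_image_add_one hc hu hcyc hno (hxY k) hT)
  obtain ⟨j, hkj, hj⟩ :=
    exists_not_adj_forall_adj_not_adj_add_one hc hu hcyc hno (hxY k) (by omega : 2 * #T < n - 1)
  by_cases hadj : ∃ l, G.Adj (x l) (u j)
  · obtain ⟨l, hl⟩ := hadj
    have hkl : x k ≠ x l := by rintro h; exact hkj (h ▸ hl)
    have := card_add_two_le_of_forall_not_adj_add_one hc hu hcyc hno hα_le (hxY k) (hxY l) hkl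
      (hxind l k (mt (congrArg x) hkl.symm)) hT fun i hi => hj _ (hxY l) hl i (hT i hi)
    omega
  · have := card_add_one_le_of_forall_not_adj hα_le (s := univ.map ⟨x, hxinj⟩)
      (by simpa [Set.Pairwise] using fun k l hkl => hxind k l (mt (congrArg x) hkl))
      (by simpa using fun l h => hxY l ⟨j, h.symm⟩)
      (by simpa [G.adj_comm] using hadj)
    simp at this

/-- Suppose `G` contains the cycle `(u_1, u_2, …, u_{n-1}, u_1)` of length `n-1`
(here encoded by an injective map `u : ZMod (n-1) → V` with consecutive vertices
adjacent) but no cycle of length `n`.  Suppose the independence number of `G` equals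
`m-1`, where `m ≤ (n+2)/2`, and `{x_1, …, x_{m-1}}` is an independent set of `m-1`
vertices outside the cycle.  Then no member of this set is adjacent to `m-2` or more
vertices on the cycle. -/
theorem indepSet_few_neighbors_on_cycle (n m : ℕ) (hn : 4 ≤ n) (hm : 2 * m ≤ n + 2)
    {V : Type*} (G : SimpleGraph V)
    (u : ZMod (n - 1) → V) (hu : Function.Injective u)
    (hcyc : ∀ i : ZMod (n - 1), G.Adj (u i) (u (i + 1)))
    (hno : ¬ HasCycleOfLength G n)
    (hα_le : ∀ s : Finset V, (s : Set V).Pairwise (fun a b => ¬ G.Adj a b) → s.card ≤ m - 1)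
    (hα_eq : ∃ s : Finset V, s.card = m - 1 ∧
      (s : Set V).Pairwise (fun a b => ¬ G.Adj a b))
    (x : Fin (m - 1) → V) (hxinj : Function.Injective x)
    (hxY : ∀ k, x k ∉ Set.range u)
    (hxind : ∀ k l, k ≠ l → ¬ G.Adj (x k) (x l)) :
    ∀ k, ({v | v ∈ Set.range u ∧ G.Adj (x k) v}).ncard < m - 2 :=
  indepSet_few_neighbors_on_cycle_general n m hn hm G u hu hcyc hno hα_le x hxinj hxY hxind
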